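/- arXiv:2402.14234 — 2 statements merged into one kernel-verified Lean document; each statement's English description precedes it below -/
import Mathlib

section
/- If n is an odd perfect number whose smallest prime factor p₁ satisfies p₁ ≥ 11, then T(n) < log 2 − 11/(50 p₁²). -/
/-!
Write `σ(n) = ∏ σ(p ^ aₚ) = 2n` over the primes `p ∣ n`. As `n` is odd, exactly one factor
`σ(q ^ a_q)` is even (`q` is Euler's prime): `a_q` is odd, so `q + 1 ∣ σ(q ^ a_q) ∣ 2n`, which
forces `(q + 1) / 2 ≥ p₁`; all other exponents are even, hence at least `2`. Dividing by `n`,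
`2 = ∏ (1 + p⁻¹ + ⋯ + p^(-aₚ)) ≥ (1 + q⁻¹) ∏_{p ≠ q} (1 + p⁻¹ + p⁻²)`. Taking logarithms with
`log (1 + x) ≥ x - x² / 2`, hence `log (1 + x + x²) ≥ x + 2x² / 5` for `x ≤ 1 / 11`, gives
`T(n) ≤ log 2 + q⁻² / 2 - (2 / 5) ∑_{p ≠ q} p⁻²`. The term `p = p₁` of the last sum, together
with `q ≥ 2p₁ - 1`, beats `q⁻² / 2` by `11 / (50 p₁²)`.
-/

open Real Finset

/-- `T n` is the sum of the reciprocals of the distinct primes dividing `n`. -/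
noncomputable def T (n : ℕ) : ℝ := ∑ p ∈ n.primeFactors, (1 : ℝ) / p

namespace Nat

lemma even_sum_range_pow_iff {p : ℕ} (hp : Odd p) (k : ℕ) :
    Even (∑ i ∈ range k, p ^ i) ↔ Even k := by
  rw [Finset.even_sum_iff_even_card_odd, filter_true_of_mem fun i _ => hp.pow, card_range]

lemma add_one_dvd_sum_range_pow (p : ℕ) {k : ℕ} (hk : Even k) :
    p + 1 ∣ ∑ i ∈ range k, p ^ i := by
  obtain ⟨m, rfl⟩ := hk
  induction m with
  | zero => simp
  | succ m ih =>
    rw [show m + 1 + (m + 1) = m + m + 1 + 1 by ring, sum_range_succ, sum_range_succ, add_assoc]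
    exact dvd_add ih ⟨p ^ (m + m), by ring⟩

theorem Perfect.prod_sum_range_pow_eq_two_mul {n : ℕ} (h : n.Perfect) :
    ∏ p ∈ n.primeFactors, ∑ i ∈ range (n.factorization p + 1), p ^ i = 2 * n := by
  rw [← (perfect_iff_sum_divisors_eq_two_mul h.2).1 h, ← ArithmeticFunction.sigma_one_apply,
    ArithmeticFunction.sigma_eq_prod_primeFactors_sum_range_factorization_pow_mul h.2.ne']
  simp only [mul_one]

theorem Perfect.exists_euler_prime {n : ℕ} (hodd : Odd n) (h : n.Perfect) :
    ∃ q ∈ n.primeFactors, q + 1 ∣ 2 * n ∧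
      ∀ p ∈ n.primeFactors, p ≠ q → Even (n.factorization p) := by
  set E : ℕ → ℕ := fun p => ∑ i ∈ range (n.factorization p + 1), p ^ i
  have hprod : ∏ p ∈ n.primeFactors, E p = 2 * n := h.prod_sum_range_pow_eq_two_mul
  have two_dvd_iff : ∀ p ∈ n.primeFactors, 2 ∣ E p ↔ Odd (n.factorization p) := fun p hp => by
    rw [← even_iff_two_dvd, even_sum_range_pow_iff (hodd.of_dvd_nat (dvd_of_mem_primeFactors hp)),
      Nat.even_add_one, Nat.not_even_iff_odd]
  obtain ⟨q, hqS, hq⟩ :=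
    (prime_two.prime.dvd_finsetProd_iff E).1 (hprod ▸ dvd_mul_right 2 n)
  have hrest : ¬ 2 ∣ ∏ p ∈ n.primeFactors.erase q, E p := fun h2 => by
    have h4 := mul_dvd_mul hq h2
    rw [mul_prod_erase _ _ hqS, hprod] at h4
    exact Nat.not_even_iff_odd.2 hodd (even_iff_two_dvd.2 (Nat.dvd_of_mul_dvd_mul_left two_pos h4))
  refine ⟨q, hqS, ?_, fun p hp hpq => ?_⟩
  · exact hprod ▸ (add_one_dvd_sum_range_pow q ((two_dvd_iff q hqS).1 hq).add_one).trans
      (dvd_prod_of_mem E hqS)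
  · rw [← Nat.not_odd_iff_even, ← two_dvd_iff p hp]
    exact fun h2 => hrest (h2.trans (dvd_prod_of_mem E (mem_erase.2 ⟨hpq, hp⟩)))

lemma two_mul_minFac_le_of_add_one_dvd {n q : ℕ} (hq : Odd q) (h3 : 3 ≤ q)
    (h : q + 1 ∣ 2 * n) : 2 * n.minFac ≤ q + 1 := by
  obtain ⟨c, hc⟩ : ∃ c, q + 1 = 2 * c := ⟨(q + 1) / 2, by obtain ⟨k, rfl⟩ := hq; omega⟩
  rw [hc] at h ⊢
  have := minFac_le_of_dvd (by omega) (Nat.dvd_of_mul_dvd_mul_left two_pos h)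
  omega

end Nat

lemma geom_sum_eq_pow_mul_geom_sum_inv {K : Type*} [DivisionRing K] {x : K} (hx : x ≠ 0)
    (a : ℕ) : ∑ i ∈ range (a + 1), x ^ i = x ^ a * ∑ i ∈ range (a + 1), x⁻¹ ^ i := by
  rw [mul_sum, ← sum_range_reflect]
  refine sum_congr rfl fun i hi => ?_
  rw [add_tsub_cancel_right, inv_pow, pow_sub₀ x hx (Nat.lt_succ_iff.1 (mem_range.1 hi))]

theorem Nat.Perfect.prod_geom_sum_inv_eq_two {n : ℕ} (h : n.Perfect) :
    ∏ p ∈ n.primeFactors, ∑ i ∈ range (n.factorization p + 1), ((p : ℝ)⁻¹) ^ i = 2 := by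
  have hn : n ≠ 0 := h.2.ne'
  have hn' : (n : ℝ) = ∏ p ∈ n.primeFactors, (p : ℝ) ^ n.factorization p := by
    exact_mod_cast Nat.prod_primeFactors_pow_factorization hn
  refine mul_left_cancel₀ (Nat.cast_ne_zero.2 hn : (n : ℝ) ≠ 0) ?_
  calc (n : ℝ) * ∏ p ∈ n.primeFactors, ∑ i ∈ range (n.factorization p + 1), ((p : ℝ)⁻¹) ^ i
      = ∏ p ∈ n.primeFactors, ∑ i ∈ range (n.factorization p + 1), (p : ℝ) ^ i := by
        rw [hn', ← prod_mul_distrib]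
        exact prod_congr rfl fun p hp => (geom_sum_eq_pow_mul_geom_sum_inv
          (Nat.cast_ne_zero.2 (Nat.prime_of_mem_primeFactors hp).ne_zero) _).symm
    _ = n * 2 := by exact_mod_cast h.prod_sum_range_pow_eq_two_mul.trans (mul_comm _ _)

lemma Real.sub_sq_div_two_le_log_one_add {x : ℝ} (hx : 0 ≤ x) : x - x ^ 2 / 2 ≤ log (1 + x) := by
  refine le_trans ?_ (le_log_one_add_of_nonneg hx)
  rw [le_div_iff₀ (by linarith)]
  nlinarith [pow_nonneg hx 3]

lemma geom_sum_range_mono {x : ℝ} (hx : 0 ≤ x) {k m : ℕ} (h : k ≤ m) :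
    ∑ i ∈ range k, x ^ i ≤ ∑ i ∈ range m, x ^ i :=
  sum_le_sum_of_subset_of_nonneg (range_subset_range.2 h) fun i _ _ => pow_nonneg hx i

lemma sub_sq_div_two_le_log_geom_sum {x : ℝ} (hx : 0 ≤ x) {a : ℕ} (ha : 1 ≤ a) :
    x - x ^ 2 / 2 ≤ log (∑ i ∈ range (a + 1), x ^ i) := by
  have h2 : 1 + x ≤ ∑ i ∈ range (a + 1), x ^ i := by
    have h := geom_sum_range_mono hx (show 2 ≤ a + 1 by omega)
    rwa [show ∑ i ∈ range 2, x ^ i = 1 + x by simp [sum_range_succ]] at h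
  exact (Real.sub_sq_div_two_le_log_one_add hx).trans (log_le_log (by linarith) h2)

lemma add_le_log_geom_sum {x : ℝ} (hx : 0 ≤ x) (hx' : x ≤ 1 / 11) {a : ℕ} (ha : 2 ≤ a) :
    x + 2 / 5 * x ^ 2 ≤ log (∑ i ∈ range (a + 1), x ^ i) := by
  have h3 : 1 + (x + x ^ 2) ≤ ∑ i ∈ range (a + 1), x ^ i := by
    have h := geom_sum_range_mono hx (show 3 ≤ a + 1 by omega)
    rwa [show ∑ i ∈ range 3, x ^ i = 1 + (x + x ^ 2) by simp [sum_range_succ]; ring] at h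
  have hy := Real.sub_sq_div_two_le_log_one_add (add_nonneg hx (sq_nonneg x))
  refine le_trans ?_ (hy.trans (log_le_log (by positivity) h3))
  nlinarith [pow_nonneg hx 3, pow_nonneg hx 4]

lemma sum_inv_le_of_prod_geom_sum_eq_two {S : Finset ℕ} {a : ℕ → ℕ} {q : ℕ} (hq : q ∈ S)
    (h11 : ∀ p ∈ S, 11 ≤ p) (ha : ∀ p ∈ S, 1 ≤ a p) (ha₂ : ∀ p ∈ S, p ≠ q → 2 ≤ a p)
    (h2 : ∏ p ∈ S, ∑ i ∈ range (a p + 1), ((p : ℝ)⁻¹) ^ i = 2) :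
    ∑ p ∈ S, (p : ℝ)⁻¹ + 2 / 5 * ∑ p ∈ S.erase q, ((p : ℝ)⁻¹) ^ 2 ≤
      log 2 + ((q : ℝ)⁻¹) ^ 2 / 2 := by
  set G : ℕ → ℝ := fun p => ∑ i ∈ range (a p + 1), ((p : ℝ)⁻¹) ^ i
  have hx : ∀ p ∈ S, 0 ≤ (p : ℝ)⁻¹ ∧ (p : ℝ)⁻¹ ≤ 1 / 11 := fun p hp => by
    have : (11 : ℝ) ≤ p := by exact_mod_cast h11 p hp
    exact ⟨by positivity, by rw [one_div]; exact inv_anti₀ (by norm_num) this⟩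
  have hG : ∀ p ∈ S, 0 < G p := fun p hp =>
    sum_pos (fun i _ => pow_pos (by have := h11 p hp; positivity) i) nonempty_range_add_one
  have hlog : log (G q) + ∑ p ∈ S.erase q, log (G p) = log 2 := by
    rw [add_sum_erase S (fun p => log (G p)) hq, ← h2, log_prod fun p hp => (hG p hp).ne']
  have hq_bound : (q : ℝ)⁻¹ - ((q : ℝ)⁻¹) ^ 2 / 2 ≤ log (G q) :=
    sub_sq_div_two_le_log_geom_sum (hx q hq).1 (ha q hq)
  have hp_bound : ∑ p ∈ S.erase q, ((p : ℝ)⁻¹ + 2 / 5 * ((p : ℝ)⁻¹) ^ 2) ≤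
      ∑ p ∈ S.erase q, log (G p) := sum_le_sum fun p hp => by
    obtain ⟨hpq, hpS⟩ := mem_erase.1 hp
    exact add_le_log_geom_sum (hx p hpS).1 (hx p hpS).2 (ha₂ p hpS hpq)
  rw [← add_sum_erase S _ hq, mul_sum]
  rw [sum_add_distrib] at hp_bound
  linarith

lemma inv_sq_div_two_sub_lt_of_two_mul_le_add_one {p q : ℝ} (hp : 11 ≤ p) (hq : 2 * p ≤ q + 1) :
    q⁻¹ ^ 2 / 2 - 2 / 5 * p⁻¹ ^ 2 < -(11 / (50 * p ^ 2)) := by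
  have hq0 : 0 < q := by linarith
  rw [inv_pow, inv_pow]
  field_simp
  nlinarith

theorem stmt_10 (n : ℕ) (hodd : Odd n) (hperf : Nat.Perfect n) (hp1 : 11 ≤ n.minFac) :
    T n < Real.log 2 - 11 / (50 * (n.minFac : ℝ) ^ 2) := by
  have hn : n ≠ 0 := hperf.2.ne'
  have hn1 : n ≠ 1 := by rintro rfl; simp at hp1
  have h11 : ∀ p ∈ n.primeFactors, 11 ≤ p := fun p hp => hp1.trans <|
    Nat.minFac_le_of_dvd (Nat.prime_of_mem_primeFactors hp).two_le (Nat.dvd_of_mem_primeFactors hp)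
  have hpos : ∀ p ∈ n.primeFactors, 1 ≤ n.factorization p := fun p hp =>
    (Nat.prime_of_mem_primeFactors hp).factorization_pos_of_dvd hn (Nat.dvd_of_mem_primeFactors hp)
  obtain ⟨q, hqS, hq_dvd, heven⟩ := hperf.exists_euler_prime hodd
  have hq : 2 * n.minFac ≤ q + 1 := Nat.two_mul_minFac_le_of_add_one_dvd
    (hodd.of_dvd_nat (Nat.dvd_of_mem_primeFactors hqS)) (by linarith [h11 q hqS]) hq_dvd
  have hsum := sum_inv_le_of_prod_geom_sum_eq_two hqS h11 hpos
    (fun p hp hpq => by obtain ⟨k, hk⟩ := heven p hp hpq; have := hpos p hp; omega)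
    hperf.prod_geom_sum_inv_eq_two
  have hp₁ : ((n.minFac : ℝ)⁻¹) ^ 2 ≤ ∑ p ∈ n.primeFactors.erase q, ((p : ℝ)⁻¹) ^ 2 :=
    single_le_sum (f := fun p : ℕ => ((p : ℝ)⁻¹) ^ 2) (fun p _ => by positivity)
      (mem_erase.2 ⟨by omega, Nat.mem_primeFactors.2 ⟨Nat.minFac_prime hn1, n.minFac_dvd, hn⟩⟩)
  have hnum := inv_sq_div_two_sub_lt_of_two_mul_le_add_one (p := n.minFac) (q := q)
    (by exact_mod_cast hp1) (by exact_mod_cast hq)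
  simp only [T, one_div]
  linarith
end

section
/- If n is an odd perfect number whose smallest prime factor p₁ satisfies p₁ ≥ 11, then S(n) < 25/(8 p₁ log p₁). -/
open Real Finset

/-- `H n = ∏_{p ∣ n} p/(p-1)` over the distinct prime divisors of `n`. -/
noncomputable def H (n : ℕ) : ℝ := ∏ p ∈ n.primeFactors, (p : ℝ) / ((p : ℝ) - 1)

/-- The surplus `S(n) = H(n) - 2`. -/
noncomputable def S (n : ℕ) : ℝ := H n - 2

/-!
Writing `n = ∏ p ^ e_p`, we have `σ(n) / n = H(n) · ∏_p (1 - p^-(e_p+1))`, so for perfect `n` the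
product equals `2 / H(n)`. For odd perfect `n`, `σ(n) = 2n` is not divisible by `4`, while
`σ(p^e) = 1 + p + ⋯ + p^e` is even exactly when `e` is odd; hence at most one exponent is odd.
That term is at most `p₁⁻²`, all others are at most `p⁻³`, and `∑_{p ≥ p₁} p⁻³ ≤ 1 / (2(p₁-1)²)`.
By the Weierstrass product inequality the product is at least `1 - B` with
`B = p₁⁻² + 1 / (2(p₁-1)²)`, so `S(n) ≤ 2B / (1 - B) < 25 / (4p₁²)`, and `log p₁ ≤ p₁ / 2` finishes.
-/

theorem Finset.one_sub_sum_le_prod_one_sub {ι R : Type*} [CommRing R] [LinearOrder R]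
    [IsStrictOrderedRing R] (s : Finset ι) {x : ι → R} (h0 : ∀ i ∈ s, 0 ≤ x i)
    (h1 : ∀ i ∈ s, x i ≤ 1) : 1 - ∑ i ∈ s, x i ≤ ∏ i ∈ s, (1 - x i) := by
  classical
  induction s using Finset.cons_induction with
  | empty => simp
  | cons a s _ ih =>
    rw [prod_cons, sum_cons]
    have ih := ih (fun i hi => h0 i (mem_cons_of_mem hi)) (fun i hi => h1 i (mem_cons_of_mem hi))
    have hxa : 0 ≤ 1 - x a := sub_nonneg.2 (h1 a (mem_cons_self a s))
    have hsum : 0 ≤ ∑ i ∈ s, x i := sum_nonneg fun i hi => h0 i (mem_cons_of_mem hi)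
    nlinarith [mul_le_mul_of_nonneg_left ih hxa, h0 a (mem_cons_self a s)]

lemma inv_pow_three_le_sub (x : ℝ) (hx : 2 ≤ x) :
    (x ^ 3)⁻¹ ≤ (2 * (x - 1) ^ 2)⁻¹ - (2 * x ^ 2)⁻¹ := by
  have hx1 : 0 < x - 1 := by linarith
  rw [inv_sub_inv (by positivity) (by positivity), inv_eq_one_div,
    div_le_div_iff₀ (by positivity) (by positivity)]
  nlinarith

lemma sum_Ico_inv_pow_three_le {k : ℕ} (hk : 2 ≤ k) (m : ℕ) :
    ∑ i ∈ Ico k m, ((i : ℝ) ^ 3)⁻¹ ≤ (2 * ((k : ℝ) - 1) ^ 2)⁻¹ := by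
  suffices ∀ m ≥ k, ∑ i ∈ Ico k m, ((i : ℝ) ^ 3)⁻¹ ≤
      (2 * ((k : ℝ) - 1) ^ 2)⁻¹ - (2 * ((m : ℝ) - 1) ^ 2)⁻¹ by
    rcases le_total k m with hkm | hmk
    · linarith [this m hkm, show 0 ≤ (2 * ((m : ℝ) - 1) ^ 2)⁻¹ by positivity]
    · rw [Ico_eq_empty_of_le hmk, sum_empty]; positivity
  intro m hkm
  induction m, hkm using Nat.le_induction with
  | base => simp
  | succ m hkm ih =>
    have hm : (2 : ℝ) ≤ m := by exact_mod_cast hk.trans hkm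
    rw [sum_Ico_succ_top hkm, Nat.cast_succ, add_sub_cancel_right]
    linarith [inv_pow_three_le_sub m hm]

lemma sum_inv_pow_three_le {s : Finset ℕ} {k : ℕ} (hk : 2 ≤ k) (hs : ∀ p ∈ s, k ≤ p) :
    ∑ p ∈ s, ((p : ℝ) ^ 3)⁻¹ ≤ (2 * ((k : ℝ) - 1) ^ 2)⁻¹ := by
  have hsub : s ⊆ Ico k (s.sup id + 1) := fun p hp =>
    mem_Ico.2 ⟨hs p hp, Nat.lt_succ_of_le (le_sup (f := id) hp)⟩
  exact (sum_le_sum_of_subset_of_nonneg hsub fun _ _ _ => by positivity).trans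
    (sum_Ico_inv_pow_three_le hk _)

lemma even_geom_sum_iff {p : ℕ} (hp : Odd p) (m : ℕ) :
    Even (∑ k ∈ range m, p ^ k) ↔ Even m := by
  rw [even_sum_iff_even_card_odd, filter_true_of_mem fun k _ => hp.pow, card_range]

lemma Nat.Perfect.card_filter_odd_factorization_le_one {n : ℕ} (hperf : n.Perfect)
    (hodd : Odd n) : #{p ∈ n.primeFactors | Odd (n.factorization p)} ≤ 1 := by
  classical
  set σ : ℕ → ℕ := fun p => ∑ k ∈ range (n.factorization p + 1), p ^ k
  have hprod : ∏ p ∈ n.primeFactors, σ p = 2 * n := by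
    rw [← Nat.sum_divisors hperf.2.ne', ← Nat.perfect_iff_sum_divisors_eq_two_mul hperf.2]
    exact hperf
  have hσ_even : ∀ p ∈ n.primeFactors, Odd (n.factorization p) → 2 ∣ σ p := fun p hp he =>
    have hp_odd := hodd.of_dvd_nat (Nat.dvd_of_mem_primeFactors hp)
    even_iff_two_dvd.1 <| (even_geom_sum_iff hp_odd _).2 he.add_one
  refine card_le_one.2 fun p hp r hr => by_contra fun hpr => ?_
  rw [mem_filter] at hp hr
  have h4 : 2 * 2 ∣ 2 * n := by
    rw [← hprod]
    refine (mul_dvd_mul (hσ_even p hp.1 hp.2) (hσ_even r hr.1 hr.2)).trans ?_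
    rw [← prod_pair hpr]
    exact prod_dvd_prod_of_subset _ _ _ (insert_subset hp.1 (singleton_subset_iff.2 hr.1))
  exact hodd.not_two_dvd_nat (Nat.dvd_of_mul_dvd_mul_left two_pos h4)

noncomputable def truncationFactor (n : ℕ) : ℝ :=
  ∏ p ∈ n.primeFactors, (1 - ((p : ℝ) ^ (n.factorization p + 1))⁻¹)

lemma geom_sum_eq_mul_div_sub_one_mul {p : ℝ} (hp : 1 < p) (e : ℕ) :
    ∑ k ∈ range (e + 1), p ^ k = p ^ e * (p / (p - 1)) * (1 - (p ^ (e + 1))⁻¹) := by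
  have hp0 : p ≠ 0 := by positivity
  have hp1 : p - 1 ≠ 0 := by linarith
  rw [geom_sum_eq hp.ne']
  field_simp
  ring

lemma sum_divisors_eq_mul_H_mul_truncationFactor (n : ℕ) :
    ∑ d ∈ n.divisors, (d : ℝ) = n * H n * truncationFactor n := by
  rcases eq_or_ne n 0 with rfl | hn
  · simp
  have hsum := congrArg (Nat.cast : ℕ → ℝ) (Nat.sum_divisors hn)
  have hn' := congrArg (Nat.cast : ℕ → ℝ) (Nat.prod_factorization_pow_eq_self hn)
  push_cast at hsum
  rw [Finsupp.prod, Nat.support_factorization] at hn'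
  push_cast at hn'
  rw [hsum, H, truncationFactor, ← hn', ← prod_mul_distrib, ← prod_mul_distrib]
  refine prod_congr rfl fun p hp => geom_sum_eq_mul_div_sub_one_mul ?_ _
  exact_mod_cast (Nat.prime_of_mem_primeFactors hp).one_lt

lemma Nat.Perfect.H_mul_truncationFactor {n : ℕ} (h : n.Perfect) :
    H n * truncationFactor n = 2 := by
  have hsum := (Nat.perfect_iff_sum_divisors_eq_two_mul h.2).1 h
  have hn : (n : ℝ) ≠ 0 := by exact_mod_cast h.2.ne'
  have := sum_divisors_eq_mul_H_mul_truncationFactor n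
  rw [← Nat.cast_sum, hsum, Nat.cast_mul, Nat.cast_two] at this
  apply mul_left_cancel₀ hn
  linarith

lemma sum_inv_pow_succ_factorization_le {n : ℕ} (hn : n ≠ 1)
    (hodd : #{p ∈ n.primeFactors | Odd (n.factorization p)} ≤ 1) :
    ∑ p ∈ n.primeFactors, ((p : ℝ) ^ (n.factorization p + 1))⁻¹ ≤
      ((n.minFac : ℝ) ^ 2)⁻¹ + (2 * ((n.minFac : ℝ) - 1) ^ 2)⁻¹ := by
  have hmin : ∀ p ∈ n.primeFactors, n.minFac ≤ p := fun p hp =>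
    Nat.minFac_le_of_dvd (Nat.prime_of_mem_primeFactors hp).two_le
      (Nat.dvd_of_mem_primeFactors hp)
  have hmin0 : (0 : ℝ) < n.minFac := by exact_mod_cast n.minFac_pos
  have hpos : ∀ p ∈ n.primeFactors, n.factorization p ≠ 0 := fun p hp =>
    Finsupp.mem_support_iff.1 hp
  rw [← sum_filter_add_sum_filter_not _ fun p => Odd (n.factorization p)]
  gcongr
  · calc _ ≤ #{p ∈ n.primeFactors | Odd (n.factorization p)} • ((n.minFac : ℝ) ^ 2)⁻¹ := by
          refine sum_le_card_nsmul _ _ _ fun p hp => ?_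
          rw [mem_filter] at hp
          have hp1 : (1 : ℝ) ≤ p := by exact_mod_cast (Nat.prime_of_mem_primeFactors hp.1).one_le
          have := hpos p hp.1
          calc ((p : ℝ) ^ (n.factorization p + 1))⁻¹ ≤ ((p : ℝ) ^ 2)⁻¹ := by
                gcongr
                omega
            _ ≤ _ := by gcongr; exact_mod_cast hmin p hp.1
      _ ≤ 1 • ((n.minFac : ℝ) ^ 2)⁻¹ := by gcongr
      _ = _ := one_smul _ _
  · calc _ ≤ ∑ p ∈ n.primeFactors with ¬Odd (n.factorization p), ((p : ℝ) ^ 3)⁻¹ := by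
          refine sum_le_sum fun p hp => ?_
          rw [mem_filter, Nat.not_odd_iff_even] at hp
          have hp1 : (1 : ℝ) ≤ p := by exact_mod_cast (Nat.prime_of_mem_primeFactors hp.1).one_le
          have : n.factorization p ≠ 0 := hpos p hp.1
          obtain ⟨k, hk⟩ := hp.2
          gcongr
          omega
      _ ≤ _ := sum_inv_pow_three_le (Nat.minFac_prime hn).two_le fun p hp =>
          hmin p (mem_filter.1 hp).1

lemma one_sub_sum_inv_pow_le_truncationFactor (n : ℕ) :
    1 - ∑ p ∈ n.primeFactors, ((p : ℝ) ^ (n.factorization p + 1))⁻¹ ≤ truncationFactor n :=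
  one_sub_sum_le_prod_one_sub _ (fun _ _ => by positivity) fun p hp =>
    inv_le_one_of_one_le₀ <| one_le_pow₀ <| by
      exact_mod_cast (Nat.prime_of_mem_primeFactors hp).one_le

lemma log_le_half_self {x : ℝ} (hx : 0 < x) : log x ≤ x / 2 := by
  have h := log_le_sub_one_of_pos (half_pos hx)
  rw [log_div hx.ne' two_ne_zero] at h
  linarith [log_two_lt_d9]

lemma sub_two_lt_of_mul_eq_two {a h P : ℝ} (ha : 11 ≤ a)
    (hP : 1 - ((a ^ 2)⁻¹ + (2 * (a - 1) ^ 2)⁻¹) ≤ P) (hhP : h * P = 2) :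
    h - 2 < 25 / (4 * a ^ 2) := by
  set B := (a ^ 2)⁻¹ + (2 * (a - 1) ^ 2)⁻¹
  have hB : B ≤ 1 / 50 := by
    have h1 : (a ^ 2)⁻¹ ≤ 1 / 121 := by
      rw [one_div]; exact inv_anti₀ (by norm_num) (by nlinarith)
    have h2 : (2 * (a - 1) ^ 2)⁻¹ ≤ 1 / 200 := by
      rw [one_div]; exact inv_anti₀ (by norm_num) (by nlinarith)
    linarith
  have hBa : B * a ^ 2 ≤ 161 / 100 := by
    have h1 : (a ^ 2)⁻¹ * a ^ 2 = 1 := inv_mul_cancel₀ (by positivity)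
    have h2 : (2 * (a - 1) ^ 2)⁻¹ * a ^ 2 ≤ 61 / 100 := by
      rw [inv_mul_le_iff₀ (by nlinarith)]
      nlinarith
    linarith [add_mul (a ^ 2)⁻¹ (2 * (a - 1) ^ 2)⁻¹ (a ^ 2)]
  have hP0 : 0 < P := by linarith
  have hh : h - 2 = 2 * (1 - P) / P := by
    rw [eq_div_iff hP0.ne']; linear_combination hhP
  rw [hh, div_lt_div_iff₀ hP0 (by positivity)]
  nlinarith [mul_le_mul_of_nonneg_right (show 1 - P ≤ B by linarith) (sq_nonneg a)]

theorem stmt_11 (n : ℕ) (hodd : Odd n) (hperf : Nat.Perfect n) (hp1 : 11 ≤ n.minFac) :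
    S n < 25 / (8 * (n.minFac : ℝ) * Real.log n.minFac) := by
  have hn1 : n ≠ 1 := by rintro rfl; norm_num at hp1
  have ha : (11 : ℝ) ≤ n.minFac := by exact_mod_cast hp1
  have hsum := sum_inv_pow_succ_factorization_le hn1
    (Nat.Perfect.card_filter_odd_factorization_le_one hperf hodd)
  have hT := (one_sub_sum_inv_pow_le_truncationFactor n).trans' (sub_le_sub_left hsum 1)
  have hlog : 0 < log n.minFac := log_pos (by linarith)
  calc S n < 25 / (4 * (n.minFac : ℝ) ^ 2) :=
        sub_two_lt_of_mul_eq_two ha hT (Nat.Perfect.H_mul_truncationFactor hperf)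
    _ ≤ 25 / (8 * (n.minFac : ℝ) * log n.minFac) := by
        refine div_le_div_of_nonneg_left (by norm_num) (by positivity) ?_
        nlinarith [log_le_half_self (x := (n.minFac : ℝ)) (by linarith)]
end
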